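/- arXiv:2212.11088 — 6 statements merged into one kernel-verified Lean document; each statement's English description precedes it below -/
import Mathlib

section
/- (Correctness of classic forward-mode AD) Let V be a type with decidable equality, D a commutative semiring, var : V → D, and x : V. Let φ : MvPolynomial V ℕ →+* TrivSqZeroExt D D be the unique semiring homomorphism into the dual numbers over D sending X y to (var y, if x = y then 1 else 0). Then for every polynomial p, the first component of φ p equals eval var p and the second component equals eval var (pderiv x p). -/
/-!
A semiring homomorphism out of `MvPolynomial V ℕ` is determined by the images of the variables,
so `φ` is evaluation at the dual point `y ↦ (var y, δ_{xy})`. The first component of this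
evaluation is ordinary evaluation at `var`. For the second one, the product rule
`(a, m)(b, n) = (ab, an + bm)` of dual numbers is exactly the Leibniz rule of `pderiv x`,
so induction on `p` identifies it with the evaluated partial derivative.
-/

namespace MvPolynomial

open TrivSqZeroExt

variable {σ R D : Type*} [DecidableEq σ] [CommSemiring R] [CommSemiring D]

def dualEval (f : R →+* D) (var : σ → D) (x : σ) : MvPolynomial σ R →+* TrivSqZeroExt D D :=
  eval₂Hom ((inlHom D D).comp f) fun y => (var y, if x = y then 1 else 0)

variable (f : R →+* D) (var : σ → D) (x : σ)

@[simp]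
theorem dualEval_C (a : R) : dualEval f var x (C a) = inl (f a) := eval₂Hom_C ..

@[simp]
theorem fst_dualEval_X (y : σ) : (dualEval f var x (X y)).fst = var y :=
  congrArg fst (eval₂Hom_X' ..)

@[simp]
theorem snd_dualEval_X (y : σ) : (dualEval f var x (X y)).snd = if x = y then 1 else 0 :=
  congrArg snd (eval₂Hom_X' ..)

theorem fst_dualEval (p : MvPolynomial σ R) : (dualEval f var x p).fst = eval₂ f var p := by
  induction p using MvPolynomial.induction_on with
  | C a => simp
  | add p q hp hq => simp only [map_add, fst_add, hp, hq, eval₂_add]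
  | mul_X p y hp => simp [hp]

theorem eval₂_pderiv_X (y : σ) :
    eval₂ f var (pderiv x (X y : MvPolynomial σ R)) = if x = y then 1 else 0 := by
  rcases eq_or_ne x y with rfl | h
  · simp
  · simp [pderiv_X_of_ne h.symm, h]

theorem snd_dualEval (p : MvPolynomial σ R) :
    (dualEval f var x p).snd = eval₂ f var (pderiv x p) := by
  induction p using MvPolynomial.induction_on with
  | C a => simp
  | add p q hp hq => simp only [map_add, snd_add, hp, hq, eval₂_add]
  | mul_X p y hp =>
    simp only [map_mul, snd_mul, fst_dualEval, hp, snd_dualEval_X,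
      Derivation.leibniz, eval₂_add, eval₂_mul, eval₂_X, eval₂_pderiv_X, smul_eq_mul, op_smul_eq_mul]
    ring

theorem eq_dualEval (φ : MvPolynomial σ ℕ →+* TrivSqZeroExt D D)
    (hφ : ∀ y, (φ (X y)).fst = var y ∧ (φ (X y)).snd = if x = y then 1 else 0) :
    φ = dualEval (Nat.castRingHom D) var x := by
  ext <;> simp [hφ]

end MvPolynomial

/-- Correctness of classic forward-mode AD with dual numbers. -/
theorem forwardAD_dual_correct (V : Type*) [DecidableEq V] (D : Type*) [CommSemiring D]
    (var : V → D) (x : V)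
    (φ : MvPolynomial V ℕ →+* TrivSqZeroExt D D)
    (hφ : ∀ y : V,
      (φ (MvPolynomial.X y)).fst = var y ∧
      (φ (MvPolynomial.X y)).snd = (if x = y then 1 else 0)) :
    ∀ p : MvPolynomial V ℕ,
      (φ p).fst = MvPolynomial.eval₂ (Nat.castRingHom D) var p ∧
      (φ p).snd = MvPolynomial.eval₂ (Nat.castRingHom D) var (MvPolynomial.pderiv x p) := by
  obtain rfl := MvPolynomial.eq_dualEval var x φ hφ
  exact fun p => ⟨MvPolynomial.fst_dualEval .., MvPolynomial.snd_dualEval ..⟩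
end

section
/- (Forward-mode AD specification, fusion form) Let V be a type with decidable equality, D a commutative semiring, var : V → D, and x : V. Let sym : MvPolynomial V ℕ →+* TrivSqZeroExt (MvPolynomial V ℕ) (MvPolynomial V ℕ) be the unique semiring homomorphism sending X y to (X y, if x = y then 1 else 0), and let fwd : MvPolynomial V ℕ →+* TrivSqZeroExt D D be the unique semiring homomorphism sending X y to (var y, if x = y then 1 else 0). Then for every polynomial p, the first component of fwd p equals eval var applied to the first component of sym p, and the second component of fwd p equals eval var applied to the second component of sym p. -/
/-! Applying `eval var` to both components is itself a semiring homomorphism of dual numbers, so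
`fwd` and `eval var ∘ sym` are two semiring homomorphisms out of the free commutative semiring
`MvPolynomial V ℕ`; they agree on the generators `X y`, hence everywhere. -/

namespace TrivSqZeroExt

variable {R S : Type*} [Semiring R] [Semiring S]

def mapRingHom (f : R →+* S) : TrivSqZeroExt R R →+* TrivSqZeroExt S S where
  toFun u := inl (f u.fst) + inr (f u.snd)
  map_one' := by ext <;> simp
  map_mul' u v := by ext <;> simp
  map_zero' := by ext <;> simp
  map_add' u v := by ext <;> simp

@[simp]
theorem fst_mapRingHom (f : R →+* S) (u : TrivSqZeroExt R R) : (mapRingHom f u).fst = f u.fst := by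
  simp [mapRingHom]

@[simp]
theorem snd_mapRingHom (f : R →+* S) (u : TrivSqZeroExt R R) : (mapRingHom f u).snd = f u.snd := by
  simp [mapRingHom]

end TrivSqZeroExt

theorem MvPolynomial.ringHom_ext_nat {σ A : Type*} [Semiring A] {f g : MvPolynomial σ ℕ →+* A}
    (h : ∀ i, f (X i) = g (X i)) : f = g :=
  ringHom_ext' (ext_nat _ _) h

/-- Forward-mode AD is the fusion of symbolic differentiation and evaluation. -/
theorem forwardAD_fusion (V : Type*) [DecidableEq V] (D : Type*) [CommSemiring D]
    (var : V → D) (x : V)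
    (sym : MvPolynomial V ℕ →+* TrivSqZeroExt (MvPolynomial V ℕ) (MvPolynomial V ℕ))
    (hsym : ∀ y : V,
      (sym (MvPolynomial.X y)).fst = MvPolynomial.X y ∧
      (sym (MvPolynomial.X y)).snd = (if x = y then 1 else 0))
    (fwd : MvPolynomial V ℕ →+* TrivSqZeroExt D D)
    (hfwd : ∀ y : V,
      (fwd (MvPolynomial.X y)).fst = var y ∧
      (fwd (MvPolynomial.X y)).snd = (if x = y then 1 else 0)) :
    ∀ p : MvPolynomial V ℕ,
      (fwd p).fst = MvPolynomial.eval₂ (Nat.castRingHom D) var ((sym p).fst) ∧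
      (fwd p).snd = MvPolynomial.eval₂ (Nat.castRingHom D) var ((sym p).snd) := by
  have fwd_eq : fwd =
      (TrivSqZeroExt.mapRingHom (MvPolynomial.eval₂Hom (Nat.castRingHom D) var)).comp sym := by
    refine MvPolynomial.ringHom_ext_nat fun y => TrivSqZeroExt.ext ?_ ?_ <;>
      simp [(hsym y).1, (hsym y).2, (hfwd y).1, (hfwd y).2]
  intro p
  simp [fwd_eq]
end

section
/- (Correctness of dense forward-mode AD: the whole gradient at once) Let V be a type with decidable equality, D a commutative semiring, and var : V → D. Equip the function space V → D with its pointwise D-module structure. Let φ : MvPolynomial V ℕ →+* TrivSqZeroExt D (V → D) be the unique semiring homomorphism sending X y to (var y, Pi.single y 1). Then for every polynomial p: the first component of φ p equals eval var p, and for every x : V, the second component of φ p evaluated at x equals eval var (pderiv x p). -/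
/-!
Evaluating a polynomial together with all of its partial derivatives,
`p ↦ (p(var), ∇p(var))`, is a semiring homomorphism into the idealization `D ⋉ (V → D)`:
multiplicativity is exactly the Leibniz rule for each `pderiv x`.
It sends `X y` to `(var y, Pi.single y 1)`, so it agrees with `φ` on the generators, and a
homomorphism out of `MvPolynomial V ℕ` is determined by its values on the variables.
-/

namespace MvPolynomial

variable {σ R S : Type*} [CommSemiring R] [CommSemiring S]

noncomputable def eval₂WithGradient (f : R →+* S) (g : σ → S) :
    MvPolynomial σ R →+* TrivSqZeroExt S (σ → S) where
  toFun p := (eval₂ f g p, fun x => eval₂ f g (pderiv x p))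
  map_zero' := by ext <;> simp
  map_one' := by ext <;> simp
  map_add' p q := by
    ext x
    · exact eval₂_add f g
    · show eval₂ f g (pderiv x (p + q)) = eval₂ f g (pderiv x p) + eval₂ f g (pderiv x q)
      rw [map_add, eval₂_add]
  map_mul' p q := by
    ext x
    · exact eval₂_mul f g
    · show eval₂ f g (pderiv x (p * q)) =
        eval₂ f g p * eval₂ f g (pderiv x q) + eval₂ f g (pderiv x p) * eval₂ f g q
      rw [pderiv_mul, eval₂_add, eval₂_mul, eval₂_mul]
      ring

@[simp]
theorem fst_eval₂WithGradient (f : R →+* S) (g : σ → S) (p : MvPolynomial σ R) :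
    (eval₂WithGradient f g p).fst = eval₂ f g p :=
  rfl

@[simp]
theorem snd_eval₂WithGradient (f : R →+* S) (g : σ → S) (p : MvPolynomial σ R) (x : σ) :
    (eval₂WithGradient f g p).snd x = eval₂ f g (pderiv x p) :=
  rfl

theorem eval₂WithGradient_X [DecidableEq σ] (f : R →+* S) (g : σ → S) (y : σ) :
    eval₂WithGradient f g (X y) = (g y, Pi.single y 1) := by
  ext x
  · simp
  · simp [Pi.single_apply, apply_ite (eval₂ f g), eq_comm]

end MvPolynomial

/-- Correctness of dense forward-mode AD: it computes the whole gradient at once. -/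
theorem forwardAD_dense_correct (V : Type*) [DecidableEq V] (D : Type*) [CommSemiring D]
    (var : V → D)
    (φ : MvPolynomial V ℕ →+* TrivSqZeroExt D (V → D))
    (hφ : ∀ y : V,
      (φ (MvPolynomial.X y)).fst = var y ∧
      (φ (MvPolynomial.X y)).snd = Pi.single y 1) :
    ∀ p : MvPolynomial V ℕ,
      (φ p).fst = MvPolynomial.eval₂ (Nat.castRingHom D) var p ∧
      ∀ x : V, (φ p).snd x =
        MvPolynomial.eval₂ (Nat.castRingHom D) var (MvPolynomial.pderiv x p) := by
  have hφ_eq : φ = MvPolynomial.eval₂WithGradient (Nat.castRingHom D) var := by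
    refine MvPolynomial.ringHom_ext' (ext_nat _ _) fun y => ?_
    rw [MvPolynomial.eval₂WithGradient_X]
    exact TrivSqZeroExt.ext (hφ y).1 (hφ y).2
  intro p
  subst hφ_eq
  simp
end

section
/- (Correctness of reverse-mode AD) Let V be a type with decidable equality, D a commutative semiring, and var : V → D. Consider the D-module E = D →ₗ[D] (V →₀ D) of D-linear maps from D to the finitely supported functions, and the Kronecker delta δ v = Finsupp.lsingle v (the linear map d ↦ Finsupp.single v d). Let φ : MvPolynomial V ℕ →+* TrivSqZeroExt D E be the unique semiring homomorphism sending X y to (var y, Finsupp.lsingle y). Then for every polynomial p: the first component of φ p equals eval var p, and for every x : V, applying the second component of φ p to the scalar 1 and evaluating the resulting finitely supported function at x yields eval var (pderiv x p). -/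
/-!
Reading off the `x`-coordinate of the cotangent, `f ↦ f 1 x`, is `D`-linear, so it induces
a homomorphism of idealizations `D ⋉ (D →ₗ[D] (V →₀ D)) → D ⋉ D`. Composed with `φ` it becomes
forward-mode evaluation in the dual numbers, seeded with `ε` at `x`, where the Leibniz rule
turns the `ε`-coefficient into `∂p/∂x`. The first components agree because both sides are
homomorphisms out of a free algebra that agree on the variables.
-/

namespace MvPolynomial

open TrivSqZeroExt

variable {R σ A : Type*} [CommSemiring R] [CommSemiring A] [Algebra R A]

theorem fst_algHom_eq_aeval {M : Type*} [AddCommMonoid M] [Module A M] [Module Aᵐᵒᵖ M]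
    [IsCentralScalar A M] [Module R M] [IsScalarTower R A M]
    (ψ : MvPolynomial σ R →ₐ[R] TrivSqZeroExt A M) (p : MvPolynomial σ R) :
    (ψ p).fst = aeval (fun i => (ψ (X i)).fst) p := by
  have h : (fstHom R A M).comp ψ = aeval fun i => (ψ (X i)).fst :=
    algHom_ext fun i => by simp
  exact DFunLike.congr_fun h p

theorem snd_algHom_eq_aeval_pderiv [DecidableEq σ]
    (ψ : MvPolynomial σ R →ₐ[R] TrivSqZeroExt A A) (x : σ)
    (hψ : ∀ i, (ψ (X i)).snd = (Pi.single x 1 : σ → A) i) (p : MvPolynomial σ R) :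
    (ψ p).snd = aeval (fun i => (ψ (X i)).fst) (pderiv x p) := by
  induction p using MvPolynomial.induction_on with
  | C a => simp [← algebraMap_eq, algebraMap_eq_inl']
  | add p q hp hq => simp [hp, hq]
  | mul_X p i hp =>
    rw [map_mul ψ, snd_mul, hp, hψ, fst_algHom_eq_aeval, pderiv_mul, pderiv_X]
    rcases eq_or_ne i x with rfl | hix <;> simp [*, mul_comm, add_comm]

end MvPolynomial

/-- Correctness of reverse-mode AD with the linear-map ("accumulating
multiplications") tangent representation. -/
theorem reverseAD_correct (V : Type*) [DecidableEq V] (D : Type*) [CommSemiring D]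
    (var : V → D)
    (φ : MvPolynomial V ℕ →+* TrivSqZeroExt D (D →ₗ[D] (V →₀ D)))
    (hφ : ∀ y : V,
      (φ (MvPolynomial.X y)).fst = var y ∧
      (φ (MvPolynomial.X y)).snd = Finsupp.lsingle y) :
    ∀ p : MvPolynomial V ℕ,
      (φ p).fst = MvPolynomial.eval₂ (Nat.castRingHom D) var p ∧
      ∀ x : V, ((φ p).snd 1) x =
        MvPolynomial.eval₂ (Nat.castRingHom D) var (MvPolynomial.pderiv x p) := by
  intro p
  let φ' : MvPolynomial V ℕ →ₐ[ℕ] TrivSqZeroExt D (D →ₗ[D] (V →₀ D)) :=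
    { φ with commutes' := fun n => by simp }
  have hφ' (q : MvPolynomial V ℕ) : φ' q = φ q := rfl
  have hvar (y : V) : (φ (MvPolynomial.X y)).fst = var y := (hφ y).1
  refine ⟨by simpa only [hφ', hvar, MvPolynomial.aeval_def, RingHom.eq_natCast'] using
    MvPolynomial.fst_algHom_eq_aeval φ' p, fun x => ?_⟩
  let readAt : (D →ₗ[D] (V →₀ D)) →ₗ[D] D := (Finsupp.lapply x).comp (LinearMap.applyₗ 1)
  let ψ : MvPolynomial V ℕ →ₐ[ℕ] TrivSqZeroExt D D :=
    ((TrivSqZeroExt.map readAt).restrictScalars ℕ).comp φ'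
  have hψ (i : V) : (ψ (MvPolynomial.X i)).snd = (Pi.single x 1 : V → D) i := by
    simp [ψ, readAt, hφ', (hφ i).2, Finsupp.single_eq_pi_single, Pi.single_comm]
  simpa [ψ, readAt, hφ', hvar, MvPolynomial.aeval_def, RingHom.eq_natCast'] using
    MvPolynomial.snd_algHom_eq_aeval_pderiv ψ x hψ p
end

section
/- (Let rule for partial derivatives) Let R be a commutative semiring, V a type with decidable equality, and x, y : V with x ≠ y. Let e₁, e₂ : MvPolynomial V R, and let σ : V → MvPolynomial V R be the substitution with σ y = e₁ and σ z = X z for z ≠ y (i.e., σ = Function.update X y e₁). Then pderiv x (bind₁ σ e₂) = (bind₁ σ (pderiv y e₂)) · pderiv x e₁ + bind₁ σ (pderiv x e₂). -/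
/-!
Both sides are additive in `e₂`, vanish on constants and satisfy the Leibniz rule along
`bind₁ σ`, so it suffices to compare them on a variable `X n`. There `σ n` is either `e₁`
(when `n = y`, and `x ≠ y` kills `pderiv x (X y)`) or `X n`, and the identity is immediate.
-/

open MvPolynomial

section LetRule

variable {R V : Type*} [CommSemiring R] [DecidableEq V] {x y : V}

theorem pderiv_update_X_apply (hxy : x ≠ y) (e : MvPolynomial V R) (n : V) :
    pderiv x (Function.update X y e n) =
      bind₁ (Function.update X y e) (pderiv y (X n)) * pderiv x e +
        bind₁ (Function.update X y e) (pderiv x (X n)) := by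
  rcases eq_or_ne n y with rfl | hny
  · simp [-pderiv_X, pderiv_X_self, pderiv_X_of_ne hxy.symm]
  · rcases eq_or_ne n x with rfl | hnx
    · simp [-pderiv_X, Function.update_of_ne hny, pderiv_X_self, pderiv_X_of_ne hny]
    · simp [-pderiv_X, Function.update_of_ne hny, pderiv_X_of_ne hny, pderiv_X_of_ne hnx]

theorem pderiv_bind₁_update_X_mul {e p q : MvPolynomial V R}
    (hp : pderiv x (bind₁ (Function.update X y e) p) =
      bind₁ (Function.update X y e) (pderiv y p) * pderiv x e +
        bind₁ (Function.update X y e) (pderiv x p))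
    (hq : pderiv x (bind₁ (Function.update X y e) q) =
      bind₁ (Function.update X y e) (pderiv y q) * pderiv x e +
        bind₁ (Function.update X y e) (pderiv x q)) :
    pderiv x (bind₁ (Function.update X y e) (p * q)) =
      bind₁ (Function.update X y e) (pderiv y (p * q)) * pderiv x e +
        bind₁ (Function.update X y e) (pderiv x (p * q)) := by
  simp only [map_mul, pderiv_mul, map_add, hp, hq]
  ring

end LetRule

/-- Let rule for partial derivatives. -/
theorem pderiv_let_rule (R V : Type*) [CommSemiring R] [DecidableEq V]
    (x y : V) (hxy : x ≠ y) (e₁ e₂ : MvPolynomial V R)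
    (σ : V → MvPolynomial V R) (hσ : σ = Function.update MvPolynomial.X y e₁) :
    MvPolynomial.pderiv x (MvPolynomial.bind₁ σ e₂) =
      (MvPolynomial.bind₁ σ (MvPolynomial.pderiv y e₂)) * MvPolynomial.pderiv x e₁ +
        MvPolynomial.bind₁ σ (MvPolynomial.pderiv x e₂) := by
  subst hσ
  induction e₂ using MvPolynomial.induction_on with
  | C a => simp
  | add p q hp hq =>
    simp only [map_add, hp, hq]
    ring
  | mul_X p n hp =>
    refine pderiv_bind₁_update_X_mul hp ?_
    simpa only [bind₁_X_right] using pderiv_update_X_apply hxy e₁ n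
end

section
/- (Correctness of fused second-order forward-mode AD) Let V be a type with decidable equality, D a commutative semiring, and var : V → D. Let D₁ = TrivSqZeroExt D (V → D), where V → D carries the pointwise D-module structure, and equip V → D₁ with the pointwise D₁-module structure. Let φ : MvPolynomial V ℕ →+* TrivSqZeroExt D₁ (V → D₁) be the unique semiring homomorphism sending X z to the pair ((var z, Pi.single z 1), Pi.single z (1 : D₁)). Then for every polynomial p and all x, y : V: the first component of the first component of φ p equals eval var p; the second component of the first component of φ p, evaluated at x, equals eval var (pderiv x p); and the second component of (the second component of φ p evaluated at x) evaluated at y equals eval var (pderiv y (pderiv x p)). -/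
/-!
A semiring map `ψ` from `MvPolynomial V ℕ` into the Nagata idealization `R ⋉ (V → R)` with
tangent parts `(ψ (X z)).snd = Pi.single z 1` is forward-mode AD: its primal part is evaluation
at the primal parts of the `ψ (X z)`, and the Leibniz rule of `R ⋉ (V → R)` makes its tangent
part the gradient. Applied with `R = D ⋉ (V → D)`, this shows that `φ` evaluates `p` and its
gradient at the first-order seeds `(var z, Pi.single z 1)`; applied once more with `R = D`, it
unfolds those values into `p`, its gradient and its Hessian at `var`.
-/

namespace MvPolynomial

variable {V R : Type*} [CommSemiring R]

theorem ringHom_apply_eq_eval₂_X {A : Type*} [CommSemiring A] (f : MvPolynomial V ℕ →+* A)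
    (p : MvPolynomial V ℕ) : f p = eval₂ (Nat.castRingHom A) (fun z => f (X z)) p :=
  RingHom.congr_fun (g := eval₂Hom _ _)
    (ringHom_ext' (Subsingleton.elim _ _) fun z =>
      (eval₂Hom_X' (Nat.castRingHom A) (fun z => f (X z)) z).symm) p

theorem fst_ringHom_apply_eq_eval₂ {M : Type*} [AddCommMonoid M] [Module R M] [Module Rᵐᵒᵖ M]
    [IsCentralScalar R M] (ψ : MvPolynomial V ℕ →+* TrivSqZeroExt R M) (p : MvPolynomial V ℕ) :
    (ψ p).fst = eval₂ (Nat.castRingHom R) (fun z => (ψ (X z)).fst) p :=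
  ringHom_apply_eq_eval₂_X ((TrivSqZeroExt.fstHom ℕ R M).toRingHom.comp ψ) p

theorem snd_ringHom_apply_eq_eval₂_pderiv [DecidableEq V]
    (ψ : MvPolynomial V ℕ →+* TrivSqZeroExt R (V → R))
    (hψ : ∀ z, (ψ (X z)).snd = Pi.single z 1) (p : MvPolynomial V ℕ) (x : V) :
    (ψ p).snd x = eval₂ (Nat.castRingHom R) (fun z => (ψ (X z)).fst) (pderiv x p) := by
  induction p using MvPolynomial.induction_on with
  | C a => rw [pderiv_C, eq_natCast C a, map_natCast, TrivSqZeroExt.snd_natCast]; simp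
  | add p q hp hq => simp [hp, hq]
  | mul_X p z hp =>
    rw [map_mul, TrivSqZeroExt.snd_mul, Derivation.leibniz, pderiv_X, hψ]
    simp only [Pi.add_apply, Pi.smul_apply, smul_eq_mul, op_smul_eq_smul, hp, eval₂_add,
      eval₂_mul, eval₂_X, fst_ringHom_apply_eq_eval₂ ψ p]
    rw [Pi.single_comm, Pi.apply_single (fun _ => eval₂ _ _) (fun _ => eval₂_zero _ _), eval₂_one]

end MvPolynomial

open MvPolynomial

/-- Correctness of fused second-order forward-mode AD with nested Nagata numbers. -/
theorem forwardAD_secondOrder_correct (V : Type*) [DecidableEq V] (D : Type*)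
    [CommSemiring D] (var : V → D)
    (φ : MvPolynomial V ℕ →+*
      TrivSqZeroExt (TrivSqZeroExt D (V → D)) (V → TrivSqZeroExt D (V → D)))
    (hφ : ∀ z : V,
      ((φ (MvPolynomial.X z)).fst).fst = var z ∧
      ((φ (MvPolynomial.X z)).fst).snd = Pi.single z 1 ∧
      (φ (MvPolynomial.X z)).snd = Pi.single z (1 : TrivSqZeroExt D (V → D))) :
    ∀ (p : MvPolynomial V ℕ) (x y : V),
      ((φ p).fst).fst = MvPolynomial.eval₂ (Nat.castRingHom D) var p ∧
      ((φ p).fst).snd x =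
        MvPolynomial.eval₂ (Nat.castRingHom D) var (MvPolynomial.pderiv x p) ∧
      (((φ p).snd x).snd) y =
        MvPolynomial.eval₂ (Nat.castRingHom D) var
          (MvPolynomial.pderiv y (MvPolynomial.pderiv x p)) := by
  intro p x y
  let ψ := eval₂Hom (Nat.castRingHom _) fun z => (φ (X z)).fst
  have hψX (z : V) : ψ (X z) = (φ (X z)).fst := eval₂Hom_X' _ _ z
  have hψ_fst : (fun z => (ψ (X z)).fst) = var := funext fun z => by rw [hψX, (hφ z).1]
  have hψ_snd (z : V) : (ψ (X z)).snd = Pi.single z 1 := by rw [hψX, (hφ z).2.1]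
  have hφ_fst : (φ p).fst = ψ p := fst_ringHom_apply_eq_eval₂ φ p
  have hφ_snd : (φ p).snd x = ψ (pderiv x p) :=
    snd_ringHom_apply_eq_eval₂_pderiv φ (fun z => (hφ z).2.2) p x
  refine ⟨?_, ?_, ?_⟩
  · rw [hφ_fst, fst_ringHom_apply_eq_eval₂ ψ, hψ_fst]
  · rw [hφ_fst, snd_ringHom_apply_eq_eval₂_pderiv ψ hψ_snd, hψ_fst]
  · rw [hφ_snd, snd_ringHom_apply_eq_eval₂_pderiv ψ hψ_snd, hψ_fst]
end
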